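/- Let k be a field of characteristic ≠ 2 and let A be a 4-dimensional unital k-algebra. Then A is an associative division algebra with center equal to k·1 admitting a Kleinian pair if and only if A is a division algebra admitting a non-degenerate quadratic form q : A → k that is multiplicative, i.e., q(x·y) = q(x)·q(y) for all x, y ∈ A (in other words, A is a 4-dimensional Hurwitz division algebra over k). -/

import Mathlib

open Module Function

variable {k : Type} [Field k]

/-- A Kleinian pair for a nonassociative `k`-algebra `(A, mul)`: a pair of distinct commuting
automorphisms, each of order 2. -/
def IsKleinPair {A : Type} [AddCommGroup A] [Module k A]
    (mul : A →ₗ[k] A →ₗ[k] A) (α β : A ≃ₗ[k] A) : Prop :=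
  (∀ x y : A, α (mul x y) = mul (α x) (α y)) ∧
  (∀ x y : A, β (mul x y) = mul (β x) (β y)) ∧
  (∀ x : A, α (α x) = x) ∧ (∀ x : A, β (β x) = x) ∧
  (∀ x : A, α (β x) = β (α x)) ∧
  α ≠ LinearEquiv.refl k A ∧ β ≠ LinearEquiv.refl k A ∧ α ≠ β

/-!
Both sides say that `A` is a quaternion algebra `ℍ[k,a,b]`, whose reduced norm `x * star x` is a
nondegenerate multiplicative form and whose sign changes `(i, j, k) ↦ (i, -j, -k)` and
`(i, j, k) ↦ (-i, j, -k)` form a Kleinian pair; so it suffices to find a basis `1, i, j, ij` of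
`A` with the quaternion multiplication table.

Given a Kleinian pair `(α, β)`, projecting onto joint eigenspaces shows that the eigenspaces for
the characters `(1, -1)` and `(-1, 1)` are nonzero (otherwise `α = β`, `β = 1` or `α = 1`);
eigenvectors `u`, `v` for them, together with `1` and `uv`, form an eigenbasis in which every
joint eigenspace is a line. Hence `u², v² ∈ k` and `vu = c • uv`, with `c² = 1` by
associativity and `c ≠ 1` because `u` is not central.

Given a nondegenerate multiplicative `q`, division makes `q` anisotropic, and polarizing
`q (xy) = q x * q y` yields `x (x y) = t(x) x y - q(x) y` with `t(x) = polar q x 1`, so `A` is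
alternative; then any trace-zero `i`, `j` with `i ⊥ j` span a `q`-orthogonal basis
`1, i, j, ij` with the quaternion table.
-/

open QuadraticMap Quaternion

theorem eq_zero_of_neg_eq_self {M : Type*} [AddCommGroup M] [Module k M] (h2 : (2 : k) ≠ 0)
    {x : M} (h : -x = x) : x = 0 := by
  have : (2 : k) • x = 0 := by rw [two_smul]; nth_rewrite 1 [← h]; exact neg_add_cancel x
  exact (smul_eq_zero.mp this).resolve_left h2

structure IsCompositionForm {A : Type} [AddCommGroup A] [Module k A]
    (mul : A →ₗ[k] A →ₗ[k] A) (q : QuadraticForm k A) : Prop where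
  nondegenerate : ∀ x, (∀ y, polar q x y = 0) → x = 0
  map_mul : ∀ x y, q (mul x y) = q x * q y

namespace QuaternionAlgebra

section NormForm

variable {R : Type*} [CommRing R] {c₁ c₂ c₃ : R}

variable (c₁ c₂ c₃) in
def normForm : QuadraticForm R ℍ[R,c₁,c₂,c₃] :=
  LinearMap.BilinMap.toQuadraticMap <| LinearMap.mk₂ R (fun x y => (x * star y).re)
    (fun _ _ _ => by simp [add_mul]) (fun _ _ _ => by simp)
    (fun _ _ _ => by simp [mul_add]) (fun _ _ _ => by simp [star_smul])

theorem normForm_apply (x : ℍ[R,c₁,c₂,c₃]) : normForm c₁ c₂ c₃ x = (x * star x).re :=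
  rfl

theorem normForm_mul (x y : ℍ[R,c₁,c₂,c₃]) :
    normForm c₁ c₂ c₃ (x * y) = normForm c₁ c₂ c₃ x * normForm c₁ c₂ c₃ y := by
  simp only [normForm_apply, star_mul]
  rw [show x * y * (star y * star x) = x * (y * star y) * star x by noncomm_ring,
    mul_star_eq_coe y, mul_coe_eq_smul, smul_mul_assoc, re_smul, smul_eq_mul, mul_comm, re_coe]

end NormForm

variable {a b : k}

theorem polar_normForm (x y : ℍ[k,a,b]) :
    polar (normForm a 0 b) x y
      = 2 * (x.re * y.re - a * x.imI * y.imI - b * x.imJ * y.imJ + a * b * x.imK * y.imK) := by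
  simp only [polar, normForm_apply, star_add, re_mul, re_add, re_star, imI_add, imI_star,
    imJ_add, imJ_star, imK_add, imK_star]
  ring

theorem normForm_nondegenerate (h2 : (2 : k) ≠ 0) (ha : a ≠ 0) (hb : b ≠ 0) (x : ℍ[k,a,b])
    (hx : ∀ y, polar (normForm a 0 b) x y = 0) : x = 0 := by
  have hre : x.re = 0 := by simpa [polar_normForm, h2] using hx ⟨1, 0, 0, 0⟩
  have hI : x.imI = 0 := by simpa [polar_normForm, h2, ha] using hx ⟨0, 1, 0, 0⟩
  have hJ : x.imJ = 0 := by simpa [polar_normForm, h2, hb] using hx ⟨0, 0, 1, 0⟩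
  have hK : x.imK = 0 := by simpa [polar_normForm, h2, ha, hb] using hx ⟨0, 0, 0, 1⟩
  ext <;> simp [hre, hI, hJ, hK]

theorem isCompositionForm_normForm (h2 : (2 : k) ≠ 0) (ha : a ≠ 0) (hb : b ≠ 0) :
    IsCompositionForm (LinearMap.mul k ℍ[k,a,b]) (normForm a 0 b) :=
  ⟨normForm_nondegenerate h2 ha hb, normForm_mul⟩

theorem eq_coe_re_of_forall_mul_comm (h2 : (2 : k) ≠ 0) (ha : a ≠ 0) {z : ℍ[k,a,b]}
    (hz : ∀ x, z * x = x * z) : z = z.re := by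
  have hiJ : -z.imJ = z.imJ := by simpa using congrArg imK (hz ⟨0, 1, 0, 0⟩)
  have hiK : -(a * z.imK) = a * z.imK := by simpa using congrArg imJ (hz ⟨0, 1, 0, 0⟩)
  have hjI : z.imI = -z.imI := by simpa using congrArg imK (hz ⟨0, 0, 1, 0⟩)
  have hI := eq_zero_of_neg_eq_self h2 hjI.symm
  have hJ := eq_zero_of_neg_eq_self h2 hiJ
  have hK := (mul_eq_zero.mp (eq_zero_of_neg_eq_self h2 hiK)).resolve_left ha
  ext <;> simp [hI, hJ, hK]

theorem center_eq (h2 : (2 : k) ≠ 0) (ha : a ≠ 0) :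
    {z : ℍ[k,a,b] | ∀ x, z * x = x * z} = Set.range (fun s : k => s • (1 : ℍ[k,a,b])) := by
  ext z
  refine ⟨fun hz => ⟨z.re, ?_⟩, ?_⟩
  · rw [Set.mem_ofPred_eq] at hz
    change z.re • (1 : ℍ[k,a,b]) = z
    rw [← coe_mul_eq_smul, mul_one]
    exact (eq_coe_re_of_forall_mul_comm h2 ha hz).symm
  · rintro ⟨s, rfl⟩ x
    simp

variable (a b) in
/-- Conjugation by `i`; `negIK` is conjugation by `j`. -/
def negJK : ℍ[k,a,b] ≃ₐ[k] ℍ[k,a,b] where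
  toFun t := ⟨t.re, t.imI, -t.imJ, -t.imK⟩
  invFun t := ⟨t.re, t.imI, -t.imJ, -t.imK⟩
  left_inv _ := by simp
  right_inv _ := by simp
  map_mul' _ _ := by ext <;> simp <;> ring
  map_add' _ _ := by ext <;> simp [add_comm]
  commutes' _ := by ext <;> simp [algebraMap_eq]

variable (a b) in
def negIK : ℍ[k,a,b] ≃ₐ[k] ℍ[k,a,b] where
  toFun t := ⟨t.re, -t.imI, t.imJ, -t.imK⟩
  invFun t := ⟨t.re, -t.imI, t.imJ, -t.imK⟩
  left_inv _ := by simp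
  right_inv _ := by simp
  map_mul' _ _ := by ext <;> simp <;> ring
  map_add' _ _ := by ext <;> simp [add_comm]
  commutes' _ := by ext <;> simp [algebraMap_eq]

theorem isKleinPair_negJK_negIK (h2 : (2 : k) ≠ 0) :
    IsKleinPair (LinearMap.mul k ℍ[k,a,b]) (negJK a b).toLinearEquiv
      (negIK a b).toLinearEquiv := by
  have hne : (-1 : k) ≠ 1 := fun h => h2 (by linear_combination -h)
  refine ⟨map_mul (negJK a b), map_mul (negIK a b), fun x => ?_, fun x => ?_, fun x => ?_,
    fun h => hne ?_, fun h => hne ?_, fun h => hne ?_⟩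
  · ext <;> simp [negJK]
  · ext <;> simp [negIK]
  · ext <;> simp [negJK, negIK]
  · simpa [negJK] using congrArg imJ (LinearEquiv.congr_fun h ⟨0, 0, 1, 0⟩)
  · simpa [negIK] using congrArg imI (LinearEquiv.congr_fun h ⟨0, 1, 0, 0⟩)
  · simpa [negJK, negIK] using congrArg imJ (LinearEquiv.congr_fun h ⟨0, 0, 1, 0⟩)

end QuaternionAlgebra

section Transport

variable {A B : Type} [AddCommGroup A] [Module k A] [AddCommGroup B] [Module k B]
  {mul : A →ₗ[k] A →ₗ[k] A} {mul' : B →ₗ[k] B →ₗ[k] B} {e : B ≃ₗ[k] A}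

theorem assoc_of_linearEquiv (he : ∀ x y, e (mul' x y) = mul (e x) (e y))
    (h : ∀ x y z, mul' (mul' x y) z = mul' x (mul' y z)) (x y z : A) :
    mul (mul x y) z = mul x (mul y z) := by
  obtain ⟨x, rfl⟩ := e.surjective x
  obtain ⟨y, rfl⟩ := e.surjective y
  obtain ⟨z, rfl⟩ := e.surjective z
  simp only [← he, h]

theorem center_eq_of_linearEquiv (he : ∀ x y, e (mul' x y) = mul (e x) (e y)) {one : A} {one' : B}
    (hone : e one' = one)
    (h : {z | ∀ x, mul' z x = mul' x z} = Set.range (fun s : k => s • one')) :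
    {z | ∀ x, mul z x = mul x z} = Set.range (fun s : k => s • one) := by
  ext z
  obtain ⟨z, rfl⟩ := e.surjective z
  have := Set.ext_iff.mp h z
  simp only [Set.mem_ofPred_eq, Set.mem_range] at this ⊢
  simp only [e.surjective.forall, ← he, e.injective.eq_iff, this, ← hone, ← map_smul]

theorem IsKleinPair.conj (he : ∀ x y, e (mul' x y) = mul (e x) (e y)) {α β : B ≃ₗ[k] B}
    (h : IsKleinPair mul' α β) :
    IsKleinPair mul (e.symm ≪≫ₗ α ≪≫ₗ e) (e.symm ≪≫ₗ β ≪≫ₗ e) := by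
  obtain ⟨hα, hβ, hαα, hββ, hαβ, hα1, hβ1, hne⟩ := h
  refine ⟨?_, ?_, ?_, ?_, ?_, fun h => hα1 ?_, fun h => hβ1 ?_, fun h => hne ?_⟩
  · simp [e.surjective.forall, ← he, hα]
  · simp [e.surjective.forall, ← he, hβ]
  · simp [hαα]
  · simp [hββ]
  · simp [hαβ]
  all_goals ext x; simpa using congrArg e.symm (LinearEquiv.congr_fun h (e x))

theorem IsCompositionForm.comp (he : ∀ x y, e (mul' x y) = mul (e x) (e y))
    {q : QuadraticForm k B} (h : IsCompositionForm mul' q) :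
    IsCompositionForm mul (q.comp e.symm.toLinearMap) := by
  refine ⟨fun x hx => ?_, fun x y => ?_⟩
  · obtain ⟨x, rfl⟩ := e.surjective x
    simpa using h.nondegenerate x fun y => by simpa [polar] using hx (e y)
  · obtain ⟨x, rfl⟩ := e.surjective x
    obtain ⟨y, rfl⟩ := e.surjective y
    simp [← he, h.map_mul]

end Transport

section Frame

variable {A : Type} [AddCommGroup A] [Module k A] {mul : A →ₗ[k] A →ₗ[k] A} {one : A}

structure IsQuaternionFrame (mul : A →ₗ[k] A →ₗ[k] A) (one : A) (a b : k) (i j : A) :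
    Prop where
  i_mul_i : mul i i = a • one
  j_mul_j : mul j j = b • one
  j_mul_i : mul j i = -mul i j
  i_mul_k : mul i (mul i j) = a • j
  k_mul_i : mul (mul i j) i = -(a • j)
  j_mul_k : mul j (mul i j) = -(b • i)
  k_mul_j : mul (mul i j) j = b • i
  k_mul_k : mul (mul i j) (mul i j) = -((a * b) • one)

namespace IsQuaternionFrame

variable {a b : k} {i j : A}

theorem of_alternative (hone : ∀ x : A, mul one x = x ∧ mul x one = x)
    (hleft : ∀ x y, mul x (mul x y) = mul (mul x x) y)
    (hright : ∀ x y, mul (mul y x) x = mul y (mul x x))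
    (hii : mul i i = a • one) (hjj : mul j j = b • one) (hji : mul j i = -mul i j)
    (hkk : mul (mul i j) (mul i j) = -((a * b) • one)) :
    IsQuaternionFrame mul one a b i j where
  i_mul_i := hii
  j_mul_j := hjj
  j_mul_i := hji
  i_mul_k := by rw [hleft, hii, LinearMap.map_smul₂, (hone j).1]
  k_mul_i := by rw [← neg_eq_iff_eq_neg.mpr hji, LinearMap.map_neg₂, hright, hii, map_smul,
    (hone j).2]
  j_mul_k := by rw [← neg_neg (mul i j), ← hji, map_neg, hleft, hjj, LinearMap.map_smul₂,
    (hone i).1]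
  k_mul_j := by rw [hright, hjj, map_smul, (hone i).2]
  k_mul_k := hkk

theorem of_assoc (hone : ∀ x : A, mul one x = x ∧ mul x one = x)
    (hassoc : ∀ x y z : A, mul (mul x y) z = mul x (mul y z))
    (hii : mul i i = a • one) (hjj : mul j j = b • one) (hji : mul j i = -mul i j) :
    IsQuaternionFrame mul one a b i j :=
  of_alternative hone (fun x y => (hassoc x x y).symm) (fun x y => hassoc y x x) hii hjj hji <| by
    rw [hassoc, ← hassoc j, hji, LinearMap.map_neg₂, hassoc, hjj, map_smul, (hone i).2, map_neg,
      map_smul, hii, smul_smul, mul_comm]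

variable (hfr : IsQuaternionFrame mul one a b i j)
  (hone : ∀ x : A, mul one x = x ∧ mul x one = x)
include hfr hone

theorem mul_expand (c0 c1 c2 c3 d0 d1 d2 d3 : k) :
    mul (c0 • one + c1 • i + c2 • j + c3 • mul i j)
        (d0 • one + d1 • i + d2 • j + d3 • mul i j) =
      (c0*d0 + a*(c1*d1) + b*(c2*d2) - a*b*(c3*d3)) • one
    + (c0*d1 + c1*d0 - b*(c2*d3) + b*(c3*d2)) • i
    + (c0*d2 + c2*d0 + a*(c1*d3) - a*(c3*d1)) • j
    + (c0*d3 + c3*d0 + c1*d2 - c2*d1) • mul i j := by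
  simp only [map_add, map_smul, LinearMap.add_apply, LinearMap.smul_apply, (hone _).1, (hone _).2,
    hfr.i_mul_i, hfr.j_mul_j, hfr.j_mul_i, hfr.i_mul_k, hfr.k_mul_i, hfr.j_mul_k, hfr.k_mul_j,
    hfr.k_mul_k, smul_neg, smul_smul]
  module

theorem exists_linearEquiv [FiniteDimensional k A] (h4 : finrank k A = 4)
    (hli : LinearIndependent k ![one, i, j, mul i j]) :
    ∃ e : ℍ[k,a,b] ≃ₗ[k] A, e 1 = one ∧ ∀ x y, e (x * y) = mul (e x) (e y) := by
  let φ := Fintype.linearCombination k ![one, i, j, mul i j] ∘ₗ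
    (QuaternionAlgebra.linearEquivTuple a 0 b).toLinearMap
  have hφ (x : ℍ[k,a,b]) :
      φ x = x.re • one + x.imI • i + x.imJ • j + x.imK • mul i j := by
    simp [φ, Fintype.linearCombination_apply, Fin.sum_univ_four]
  have hinj : Injective φ :=
    hli.fintypeLinearCombination_injective.comp (LinearEquiv.injective _)
  have hbij : Bijective φ := ⟨hinj, (LinearMap.injective_iff_surjective_of_finrank_eq_finrank
    (by rw [QuaternionAlgebra.finrank_eq_four, h4])).mp hinj⟩
  refine ⟨LinearEquiv.ofBijective φ hbij, by simp [hφ], fun x y => ?_⟩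
  simp only [LinearEquiv.ofBijective_apply, hφ, hfr.mul_expand hone, QuaternionAlgebra.re_mul,
    QuaternionAlgebra.imI_mul, QuaternionAlgebra.imJ_mul, QuaternionAlgebra.imK_mul, zero_mul,
    add_zero]
  module

end IsQuaternionFrame

end Frame

section Composition

variable {A : Type} [AddCommGroup A] [Module k A] {mul : A →ₗ[k] A →ₗ[k] A} {one : A}
  {q : QuadraticForm k A}

theorem exists_ne_zero_forall_polar_eq_zero [FiniteDimensional k A] {n : ℕ} (v : Fin n → A)
    (hn : n < finrank k A) : ∃ x ≠ 0, ∀ p, polar q x (v p) = 0 := by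
  let f : A →ₗ[k] Fin n → k := LinearMap.pi fun p => (polarBilin q).flip (v p)
  obtain ⟨x, hx, hx0⟩ := Submodule.exists_mem_ne_zero_of_ne_bot
    (LinearMap.ker_ne_bot_of_finrank_lt (f := f) (by simpa using hn))
  exact ⟨x, hx0, fun p => congrFun (LinearMap.mem_ker.mp hx) p⟩

theorem IsCompositionForm.anisotropic (hq : IsCompositionForm mul q)
    (hsurj : ∀ x ≠ 0, Surjective (mul x)) : q.Anisotropic := by
  intro x hx
  by_contra hx0
  have hq0 (z : A) : q z = 0 := by
    obtain ⟨y, rfl⟩ := hsurj x hx0 z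
    rw [hq.map_mul, hx, zero_mul]
  exact hx0 (hq.nondegenerate x fun y => by simp [polar, hq0])

section Multiplicative

variable (hmul : ∀ x y, q (mul x y) = q x * q y)
include hmul

theorem polar_mul_mul_left (x y z : A) : polar q (mul x y) (mul x z) = q x * polar q y z := by
  simp only [polar, ← map_add, hmul]
  ring

theorem polar_mul_mul_right (x y z : A) : polar q (mul y x) (mul z x) = q x * polar q y z := by
  simp only [polar, ← LinearMap.add_apply, ← map_add, hmul]
  ring

theorem polar_mul_add_polar_mul_left (x w y z : A) :
    polar q (mul x y) (mul w z) + polar q (mul w y) (mul x z) = polar q x w * polar q y z := by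
  have h := polar_mul_mul_left hmul (x + w) y z
  simp only [map_add, LinearMap.add_apply, polar_add_left, polar_add_right,
    polar_mul_mul_left hmul] at h
  simp only [polar] at h ⊢
  linear_combination h

theorem polar_mul_add_polar_mul_right (x w y z : A) :
    polar q (mul y x) (mul z w) + polar q (mul y w) (mul z x) = polar q x w * polar q y z := by
  have h := polar_mul_mul_right hmul (x + w) y z
  simp only [map_add, polar_add_left, polar_add_right, polar_mul_mul_right hmul] at h
  simp only [polar] at h ⊢
  linear_combination h

theorem polar_mul_one (hone : ∀ x : A, mul one x = x ∧ mul x one = x) {i j : A}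
    (hi : polar q i one = 0) (hij : polar q i j = 0) :
    polar q (mul i j) one = 0 := by
  have h := polar_mul_add_polar_mul_left hmul i one j one
  rwa [(hone _).1, (hone _).2, (hone _).1, polar_comm (⇑q) j i, hij, hi, zero_mul,
    add_zero] at h

end Multiplicative

namespace IsCompositionForm

variable (hq : IsCompositionForm mul q) (hone : ∀ x : A, mul one x = x ∧ mul x one = x)
include hq hone

theorem mul_mul_left (x y : A) : mul x (mul x y) = polar q x one • mul x y - q x • y := by
  rw [← sub_eq_zero]
  refine hq.nondegenerate _ fun z => ?_
  have h := polar_mul_add_polar_mul_left hq.map_mul x one (mul x y) z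
  rw [(hone _).1, (hone _).1, polar_mul_mul_left hq.map_mul] at h
  simp only [polar_sub_left, polar_smul_left, smul_eq_mul]
  linear_combination h

theorem mul_mul_right (x y : A) : mul (mul y x) x = polar q x one • mul y x - q x • y := by
  rw [← sub_eq_zero]
  refine hq.nondegenerate _ fun z => ?_
  have h := polar_mul_add_polar_mul_right hq.map_mul x one (mul y x) z
  rw [(hone _).2, (hone _).2, polar_mul_mul_right hq.map_mul] at h
  simp only [polar_sub_left, polar_smul_left, smul_eq_mul]
  linear_combination h

theorem mul_self (x : A) : mul x x = polar q x one • x - q x • one := by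
  simpa only [(hone x).2] using hq.mul_mul_left hone x one

theorem mul_mul_self_left (x y : A) : mul x (mul x y) = mul (mul x x) y := by
  rw [hq.mul_mul_left hone, hq.mul_self hone, LinearMap.map_sub₂, LinearMap.map_smul₂,
    LinearMap.map_smul₂, (hone y).1]

theorem mul_mul_self_right (x y : A) : mul (mul y x) x = mul y (mul x x) := by
  rw [hq.mul_mul_right hone, hq.mul_self hone, map_sub, map_smul, map_smul, (hone y).2]

theorem isQuaternionFrame {i j : A} (hi : polar q i one = 0) (hj : polar q j one = 0)
    (hij : polar q i j = 0) : IsQuaternionFrame mul one (-q i) (-q j) i j := by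
  have hii : mul i i = -q i • one := by rw [hq.mul_self hone, hi]; module
  have hjj : mul j j = -q j • one := by rw [hq.mul_self hone, hj]; module
  refine .of_alternative hone (hq.mul_mul_self_left hone) (hq.mul_mul_self_right hone) hii hjj
    ?_ ?_
  · have hqij : q (i + j) = q i + q j := by
      simp only [polar] at hij
      linear_combination hij
    have h := hq.mul_self hone (i + j)
    rw [polar_add_left, hi, hj, hqij] at h
    simp only [map_add, LinearMap.add_apply, hii, hjj] at h
    linear_combination (norm := module) h
  · rw [hq.mul_self hone, polar_mul_one hq.map_mul hone hi hij, hq.map_mul]; module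

theorem linearIndependent (h2 : (2 : k) ≠ 0) (hsurj : ∀ x ≠ 0, Surjective (mul x)) {i j : A}
    (hi0 : i ≠ 0) (hj0 : j ≠ 0) (hi : polar q i one = 0) (hj : polar q j one = 0)
    (hij : polar q i j = 0) : LinearIndependent k ![one, i, j, mul i j] := by
  have hone0 : one ≠ 0 := fun h => hi0 (by simpa [h] using ((hone i).1).symm)
  have hqi : q i ≠ 0 := mt (hq.anisotropic hsurj _) hi0
  have hqj : q j ≠ 0 := mt (hq.anisotropic hsurj _) hj0
  have hk := polar_mul_one hq.map_mul hone hi hij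
  have hki : polar q (mul i j) i = 0 := by
    simpa [(hone i).2, hj] using polar_mul_mul_left hq.map_mul i j one
  have hkj : polar q (mul i j) j = 0 := by
    simpa [(hone j).1, hi] using polar_mul_mul_right hq.map_mul j i one
  refine LinearMap.BilinForm.linearIndependent_of_iIsOrtho (B := polarBilin q) ?_ fun p => ?_
  · rw [LinearMap.BilinForm.iIsOrtho_def]
    intro p p' hpp'
    fin_cases p <;> fin_cases p' <;> simp_all [polar_comm (⇑q) one, polar_comm (⇑q) j i,
      polar_comm (⇑q) i (mul i j), polar_comm (⇑q) j (mul i j)]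
  · have hv : q (![one, i, j, mul i j] p) ≠ 0 := by
      fin_cases p
      exacts [mt (hq.anisotropic hsurj _) hone0, hqi, hqj, by simp [hq.map_mul, hqi, hqj]]
    simpa [polar_self, h2] using hv

theorem exists_isQuaternionFrame [FiniteDimensional k A] (h4 : finrank k A = 4)
    (h2 : (2 : k) ≠ 0) (hsurj : ∀ x ≠ 0, Surjective (mul x)) :
    ∃ a b : k, ∃ i j : A, a ≠ 0 ∧ b ≠ 0 ∧ IsQuaternionFrame mul one a b i j ∧
      LinearIndependent k ![one, i, j, mul i j] := by
  obtain ⟨i, hi0, hi⟩ := exists_ne_zero_forall_polar_eq_zero (q := q) ![one]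
    (by rw [h4]; norm_num)
  obtain ⟨j, hj0, hj⟩ := exists_ne_zero_forall_polar_eq_zero (q := q) ![one, i]
    (by rw [h4]; norm_num)
  have hij : polar q i j = 0 := by simpa [polar_comm] using hj 1
  refine ⟨-q i, -q j, i, j, neg_ne_zero.mpr (mt (hq.anisotropic hsurj _) hi0),
    neg_ne_zero.mpr (mt (hq.anisotropic hsurj _) hj0),
    hq.isQuaternionFrame hone (hi 0) (hj 0) hij,
    hq.linearIndependent hone h2 hsurj hi0 hj0 (hi 0) (hj 0) hij⟩

end IsCompositionForm

end Composition

section JointEigenspace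

variable {A : Type} [AddCommGroup A] [Module k A]

def jointEigenspace (α β : Module.End k A) (s t : k) : Submodule k A :=
  α.eigenspace s ⊓ β.eigenspace t

theorem mem_jointEigenspace {α β : Module.End k A} {s t : k} {x : A} :
    x ∈ jointEigenspace α β s t ↔ α x = s • x ∧ β x = t • x := by
  simp [jointEigenspace]

theorem linearIndependent_of_mem_jointEigenspace (h2 : (2 : k) ≠ 0) {α β : Module.End k A}
    {x : Fin 4 → A} (hx0 : ∀ p, x p ≠ 0)
    (hx : ∀ p, x p ∈ jointEigenspace α β (![(1 : k), 1, -1, -1] p) (![1, -1, 1, -1] p)) :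
    LinearIndependent k x := by
  simp only [mem_jointEigenspace] at hx
  rw [Fintype.linearIndependent_iff]
  intro g hg
  rw [Fin.sum_univ_four] at hg
  have hgα := congrArg α hg
  have hgβ := congrArg β hg
  simp only [map_add, map_smul, map_zero, (hx _).1, (hx _).2, Matrix.cons_val, one_smul,
    neg_smul, smul_neg] at hgα hgβ
  have hgβα := congrArg β hgα
  simp only [map_add, map_smul, map_neg, map_zero, (hx _).2, Matrix.cons_val, one_smul,
    neg_smul, smul_neg, neg_neg] at hgβα
  have h4 : (4 : k) ≠ 0 := by simpa [show (4 : k) = 2 * 2 by norm_num] using h2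
  -- Summing the four relations twisted by the signs of `p` kills every term but the `p`-th.
  have key : (4 * g 0) • x 0 = 0 ∧ (4 * g 1) • x 1 = 0 ∧ (4 * g 2) • x 2 = 0 ∧
      (4 * g 3) • x 3 = 0 := by
    refine ⟨?_, ?_, ?_, ?_⟩
    · linear_combination (norm := module) hg + hgα + hgβ + hgβα
    · linear_combination (norm := module) hg + hgα - hgβ - hgβα
    · linear_combination (norm := module) hg - hgα + hgβ - hgβα
    · linear_combination (norm := module) hg - hgα - hgβ + hgβα
  intro p
  fin_cases p
  exacts [by simpa [h4, hx0] using key.1, by simpa [h4, hx0] using key.2.1,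
    by simpa [h4, hx0] using key.2.2.1, by simpa [h4, hx0] using key.2.2.2]

theorem Module.Basis.repr_eq_zero_of_eigen {ι : Type*} [Fintype ι] (e : Basis ι k A)
    {f : Module.End k A} {s : ι → k} (hf : ∀ p, f (e p) = s p • e p) {w : A} {c : k}
    (hw : f w = c • w) {p : ι} (hp : s p ≠ c) : e.repr w p = 0 := by
  have h : e.repr (f w) p = e.repr w p * s p := by
    have hfw : f w = ∑ q, (e.repr w q * s q) • e q := by
      conv_lhs => rw [← e.sum_repr w]
      simp only [map_sum, map_smul, hf, smul_smul]
    rw [hfw, e.repr_sum_self]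
  rw [hw, map_smul, Finsupp.smul_apply, smul_eq_mul] at h
  exact (mul_eq_zero.mp (by linear_combination -h : (s p - c) * e.repr w p = 0)).resolve_left
    (sub_ne_zero.mpr hp)

theorem Module.Basis.eq_smul_of_mem_jointEigenspace {ι : Type*} [Fintype ι] (e : Basis ι k A)
    {α β : Module.End k A} {s t : ι → k}
    (he : ∀ p, e p ∈ jointEigenspace α β (s p) (t p))
    (hst : Function.Injective fun p => (s p, t p)) {w : A} {p₀ : ι}
    (hw : w ∈ jointEigenspace α β (s p₀) (t p₀)) : w = e.repr w p₀ • e p₀ := by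
  classical
  simp only [mem_jointEigenspace] at he hw
  have hrepr (p : ι) (hp : p ≠ p₀) : e.repr w p = 0 := by
    by_cases hs : s p = s p₀
    · exact e.repr_eq_zero_of_eigen (fun p => (he p).2) hw.2 fun ht => hp (hst (Prod.ext hs ht))
    · exact e.repr_eq_zero_of_eigen (fun p => (he p).1) hw.1 hs
  conv_lhs => rw [← e.sum_repr w]
  exact Finset.sum_eq_single p₀ (fun p _ hp => by rw [hrepr p hp, zero_smul]) (by simp)

end JointEigenspace

section KleinPair

variable {A : Type} [AddCommGroup A] [Module k A] {mul : A →ₗ[k] A →ₗ[k] A} {one : A}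

theorem LinearEquiv.map_one_of_map_mul (hone : ∀ x : A, mul one x = x ∧ mul x one = x)
    (σ : A ≃ₗ[k] A) (hσ : ∀ x y, σ (mul x y) = mul (σ x) (σ y)) : σ one = one := by
  obtain ⟨y, hy⟩ := σ.surjective one
  calc σ one = mul (σ one) (σ y) := by rw [hy, (hone _).2]
    _ = one := by rw [← hσ, (hone y).1, hy]

namespace IsKleinPair

variable {α β : A ≃ₗ[k] A} (h : IsKleinPair mul α β)
include h

theorem add_smul_mem_jointEigenspace {s t : k} (hs : s * s = 1) (ht : t * t = 1) (x : A) :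
    x + s • α x + t • β x + (s * t) • α (β x) ∈ jointEigenspace α β s t := by
  obtain ⟨-, -, hαα, hββ, hαβ, -⟩ := h
  rw [mem_jointEigenspace]
  simp only [LinearEquiv.coe_coe, map_add, map_smul, hαα, hββ]
  constructor
  · linear_combination (norm := module) hs • (-α x - t • α (β x))
  · simp only [← hαβ, hββ]
    linear_combination (norm := module) ht • (-β x - s • α (β x))

theorem mul_mem_jointEigenspace {s t s' t' : k} {x y : A} (hx : x ∈ jointEigenspace α β s t)
    (hy : y ∈ jointEigenspace α β s' t') :
    mul x y ∈ jointEigenspace α β (s * s') (t * t') := by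
  obtain ⟨hα, hβ, -⟩ := h
  simp only [mem_jointEigenspace, LinearEquiv.coe_coe] at hx hy ⊢
  rw [hα, hβ, hx.1, hx.2, hy.1, hy.2]
  simp [smul_smul, mul_comm]

theorem jointEigenspace_ne_bot (h2 : (2 : k) ≠ 0)
    (hzd : ∀ x y : A, x ≠ 0 → y ≠ 0 → mul x y ≠ 0) :
    jointEigenspace (α : Module.End k A) β 1 (-1) ≠ ⊥ ∧
      jointEigenspace (α : Module.End k A) β (-1) 1 ≠ ⊥ := by
  have hproj {s t : k} (hs : s * s = 1) (ht : t * t = 1)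
      (hJ : jointEigenspace (α : Module.End k A) β s t = ⊥) (x : A) :
      x + s • α x + t • β x + (s * t) • α (β x) = 0 := by
    simpa [hJ] using h.add_smul_mem_jointEigenspace hs ht x
  have hmul {s t s' t' : k} (hJ : jointEigenspace (α : Module.End k A) β s t ≠ ⊥)
      (hJ' : jointEigenspace (α : Module.End k A) β s' t' ≠ ⊥) :
      jointEigenspace (α : Module.End k A) β (s * s') (t * t') ≠ ⊥ := by
    obtain ⟨x, hx, hx0⟩ := Submodule.exists_mem_ne_zero_of_ne_bot hJ
    obtain ⟨y, hy, hy0⟩ := Submodule.exists_mem_ne_zero_of_ne_bot hJ'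
    exact (Submodule.ne_bot_iff _).mpr ⟨_, h.mul_mem_jointEigenspace hx hy, hzd x y hx0 hy0⟩
  -- Two of the three eigenspaces cannot both vanish (else `α = β`, `β = 1` or `α = 1`), and the
  -- product of nonzero vectors from two of them is a nonzero vector in the third.
  obtain ⟨-, -, -, -, -, hα1, hβ1, hαβ⟩ := h
  have hext {f g : A ≃ₗ[k] A} (hfg : ∀ x, (2 : k) • (f x - g x) = 0) : f = g :=
    LinearEquiv.ext fun x => sub_eq_zero.mp ((smul_eq_zero.mp (hfg x)).resolve_left h2)
  have h₁₂ : jointEigenspace (α : Module.End k A) β 1 (-1) ≠ ⊥ ∨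
      jointEigenspace (α : Module.End k A) β (-1) 1 ≠ ⊥ := by
    by_contra! hc
    refine hαβ (hext fun x => ?_)
    linear_combination (norm := module) hproj (by norm_num) (by norm_num) hc.1 x -
      hproj (by norm_num) (by norm_num) hc.2 x
  have h₁₃ : jointEigenspace (α : Module.End k A) β 1 (-1) ≠ ⊥ ∨
      jointEigenspace (α : Module.End k A) β (-1) (-1) ≠ ⊥ := by
    by_contra! hc
    refine hβ1 (hext fun x => ?_)
    rw [LinearEquiv.refl_apply]
    linear_combination (norm := module) -hproj (by norm_num) (by norm_num) hc.1 x -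
      hproj (by norm_num) (by norm_num) hc.2 x
  have h₂₃ : jointEigenspace (α : Module.End k A) β (-1) 1 ≠ ⊥ ∨
      jointEigenspace (α : Module.End k A) β (-1) (-1) ≠ ⊥ := by
    by_contra! hc
    refine hα1 (hext fun x => ?_)
    rw [LinearEquiv.refl_apply]
    linear_combination (norm := module) -hproj (by norm_num) (by norm_num) hc.1 x -
      hproj (by norm_num) (by norm_num) hc.2 x
  constructor
  · intro hJ
    simpa [hJ] using
      hmul (h₁₂.resolve_left (not_not.mpr hJ)) (h₁₃.resolve_left (not_not.mpr hJ))
  · intro hJ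
    simpa [hJ] using
      hmul (h₁₂.resolve_right (not_not.mpr hJ)) (h₂₃.resolve_left (not_not.mpr hJ))

theorem not_forall_mul_comm (h2 : (2 : k) ≠ 0) (hone : ∀ x : A, mul one x = x ∧ mul x one = x)
    (hcen : {z : A | ∀ x : A, mul z x = mul x z} = Set.range (fun s : k => s • one)) {u : A}
    (hu : u ∈ jointEigenspace α β (1 : k) (-1)) (hu0 : u ≠ 0) :
    ¬ ∀ x, mul u x = mul x u := by
  intro hcomm
  obtain ⟨s, rfl⟩ : u ∈ Set.range (fun s : k => s • one) := hcen ▸ hcomm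
  rw [mem_jointEigenspace] at hu
  refine hu0 (eq_zero_of_neg_eq_self h2 ?_)
  simpa [β.map_one_of_map_mul hone h.2.1] using hu.2.symm

theorem exists_eigenbasis [FiniteDimensional k A] (h4 : finrank k A = 4) (h2 : (2 : k) ≠ 0)
    (hone : ∀ x : A, mul one x = x ∧ mul x one = x)
    (hzd : ∀ x y : A, x ≠ 0 → y ≠ 0 → mul x y ≠ 0) :
    ∃ (u v : A) (e : Basis (Fin 4) k A), ⇑e = ![one, u, v, mul u v] ∧
      ∀ p, e p ∈ jointEigenspace α β (![(1 : k), 1, -1, -1] p) (![(1 : k), -1, 1, -1] p) := by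
  obtain ⟨hJ₁, hJ₂⟩ := h.jointEigenspace_ne_bot h2 hzd
  obtain ⟨u, hu, hu0⟩ := Submodule.exists_mem_ne_zero_of_ne_bot hJ₁
  obtain ⟨v, hv, hv0⟩ := Submodule.exists_mem_ne_zero_of_ne_bot hJ₂
  have hx : ∀ p, ![one, u, v, mul u v] p ∈
      jointEigenspace α β (![(1 : k), 1, -1, -1] p) (![(1 : k), -1, 1, -1] p) := by
    intro p
    fin_cases p
    · simp [mem_jointEigenspace, α.map_one_of_map_mul hone h.1, β.map_one_of_map_mul hone h.2.1]
    · exact hu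
    · exact hv
    · simpa using h.mul_mem_jointEigenspace hu hv
  have hone0 : one ≠ 0 := fun h0 => hu0 (by simpa [h0] using ((hone u).1).symm)
  have hx0 : ∀ p, ![one, u, v, mul u v] p ≠ 0 := by
    intro p
    fin_cases p
    exacts [hone0, hu0, hv0, hzd u v hu0 hv0]
  have hli := linearIndependent_of_mem_jointEigenspace h2 hx0 hx
  exact ⟨u, v, basisOfLinearIndependentOfCardEqFinrank hli (by simp [h4]),
    coe_basisOfLinearIndependentOfCardEqFinrank hli _, by simpa using hx⟩

theorem exists_isQuaternionFrame [FiniteDimensional k A] (h4 : finrank k A = 4)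
    (h2 : (2 : k) ≠ 0) (hone : ∀ x : A, mul one x = x ∧ mul x one = x)
    (hassoc : ∀ x y z : A, mul (mul x y) z = mul x (mul y z))
    (hzd : ∀ x y : A, x ≠ 0 → y ≠ 0 → mul x y ≠ 0)
    (hcen : {z : A | ∀ x : A, mul z x = mul x z} = Set.range (fun s : k => s • one)) :
    ∃ a b : k, ∃ u v : A, a ≠ 0 ∧ b ≠ 0 ∧ IsQuaternionFrame mul one a b u v ∧
      LinearIndependent k ![one, u, v, mul u v] := by
  obtain ⟨u, v, e, he, hmem⟩ := h.exists_eigenbasis h4 h2 hone hzd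
  have hu : u ∈ jointEigenspace α β (1 : k) (-1) := by simpa [he] using hmem 1
  have hv : v ∈ jointEigenspace α β (-1 : k) 1 := by simpa [he] using hmem 2
  have hu0 : u ≠ 0 := by simpa [he] using e.ne_zero 1
  have hv0 : v ≠ 0 := by simpa [he] using e.ne_zero 2
  have hst : Function.Injective fun p : Fin 4 =>
      (![(1 : k), 1, -1, -1] p, ![(1 : k), -1, 1, -1] p) := by
    have hne : (-1 : k) ≠ 1 := fun h => h2 (by linear_combination -h)
    intro p q hpq
    fin_cases p <;> fin_cases q <;> simp_all [hne.symm]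
  have hJ (p₀ : Fin 4) {w : A}
      (hw : w ∈ jointEigenspace α β (![(1 : k), 1, -1, -1] p₀) (![(1 : k), -1, 1, -1] p₀)) :
      ∃ c : k, w = c • ![one, u, v, mul u v] p₀ :=
    ⟨_, he ▸ e.eq_smul_of_mem_jointEigenspace hmem hst hw⟩
  obtain ⟨a, hu2⟩ : ∃ a : k, mul u u = a • one := by
    simpa using hJ 0 (by simpa using h.mul_mem_jointEigenspace hu hu)
  obtain ⟨b, hv2⟩ : ∃ b : k, mul v v = b • one := by
    simpa using hJ 0 (by simpa using h.mul_mem_jointEigenspace hv hv)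
  obtain ⟨c, hvu⟩ : ∃ c : k, mul v u = c • mul u v := by
    simpa using hJ 3 (by simpa using h.mul_mem_jointEigenspace hv hu)
  have ha : a ≠ 0 := fun ha => hzd u u hu0 hu0 (by rw [hu2, ha, zero_smul])
  have hb : b ≠ 0 := fun hb => hzd v v hv0 hv0 (by rw [hv2, hb, zero_smul])
  have hcc : c * c = 1 := by
    have h₁ : mul (mul v u) u = a • v := by rw [hassoc, hu2, map_smul, (hone v).2]
    have h₂ : mul (mul v u) u = (c * c * a) • v := by
      rw [hvu, LinearMap.map_smul₂, hassoc, hvu, map_smul, ← hassoc, hu2, LinearMap.map_smul₂,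
        (hone v).1, smul_smul, smul_smul]
    have h₃ : ((c * c - 1) * a) • v = 0 := by linear_combination (norm := module) h₁ - h₂
    simpa [hv0, ha, sub_eq_zero] using h₃
  have hc1 : c ≠ 1 := by
    rintro rfl
    rw [one_smul] at hvu
    have hcomm : mul u = mul.flip u := e.ext fun p => by
      fin_cases p <;> simp [he, (hone u).1, (hone u).2, hvu, hassoc]
    exact h.not_forall_mul_comm h2 hone hcen hu hu0 (LinearMap.congr_fun hcomm)
  have hc : c = -1 := (mul_self_eq_one_iff.mp hcc).resolve_left hc1
  refine ⟨a, b, u, v, ha, hb, .of_assoc hone hassoc hu2 hv2 (by rw [hvu, hc, neg_one_smul]), ?_⟩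
  exact he ▸ e.linearIndependent

end IsKleinPair

end KleinPair

/-- Let `k` be a field of characteristic ≠ 2 and `A` a 4-dimensional unital
`k`-algebra. Then `A` is an associative division algebra with center `k·1` admitting a
Kleinian pair if and only if `A` is a division algebra admitting a non-degenerate
multiplicative quadratic form `q : A → k`, i.e. a 4-dimensional Hurwitz division algebra. -/
theorem central_skewfield_iff_hurwitz (hchar : (2 : k) ≠ 0)
    (A : Type) [AddCommGroup A] [Module k A] [FiniteDimensional k A]
    (mul : A →ₗ[k] A →ₗ[k] A) (one : A)
    (h4 : finrank k A = 4)
    (hone : ∀ x : A, mul one x = x ∧ mul x one = x) :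
    ((∀ x y z : A, mul (mul x y) z = mul x (mul y z)) ∧
     (∀ a : A, a ≠ 0 →
       Function.Bijective (fun x => mul a x) ∧ Function.Bijective (fun x => mul x a)) ∧
     ({z : A | ∀ x : A, mul z x = mul x z} = Set.range (fun s : k => s • one)) ∧
     (∃ α β : A ≃ₗ[k] A, IsKleinPair mul α β)) ↔
    ((∀ a : A, a ≠ 0 →
       Function.Bijective (fun x => mul a x) ∧ Function.Bijective (fun x => mul x a)) ∧
     (∃ q : QuadraticForm k A,
       (∀ x : A, (∀ y : A, QuadraticMap.polar (⇑q) x y = 0) → x = 0) ∧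
       (∀ x y : A, q (mul x y) = q x * q y))) := by
  constructor
  · rintro ⟨hassoc, hdiv, hcen, α, β, hkp⟩
    have hzd (x y : A) (hx : x ≠ 0) (hy : y ≠ 0) : mul x y ≠ 0 :=
      fun hxy => hy ((hdiv x hx).1.1 (hxy.trans (map_zero (mul x)).symm))
    obtain ⟨a, b, i, j, ha, hb, hfr, hli⟩ :=
      hkp.exists_isQuaternionFrame h4 hchar hone hassoc hzd hcen
    obtain ⟨e, -, he⟩ := hfr.exists_linearEquiv hone h4 hli
    have hq := (QuaternionAlgebra.isCompositionForm_normForm hchar ha hb).comp he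
    exact ⟨hdiv, _, hq.nondegenerate, hq.map_mul⟩
  · rintro ⟨hdiv, q, hnd, hmul⟩
    obtain ⟨a, b, i, j, ha, hb, hfr, hli⟩ :=
      IsCompositionForm.exists_isQuaternionFrame ⟨hnd, hmul⟩ hone h4 hchar
        fun x hx => (hdiv x hx).1.2
    obtain ⟨e, he1, he⟩ := hfr.exists_linearEquiv hone h4 hli
    exact ⟨assoc_of_linearEquiv (mul' := LinearMap.mul k ℍ[k,a,b]) he mul_assoc, hdiv,
      center_eq_of_linearEquiv (mul' := LinearMap.mul k ℍ[k,a,b]) he he1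
        (QuaternionAlgebra.center_eq hchar ha),
      _, _, (QuaternionAlgebra.isKleinPair_negJK_negIK hchar).conj he⟩
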